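/- arXiv:2311.16611 — 2 statements merged into one kernel-verified Lean document; each statement's English description precedes it below -/
import Mathlib

section
/- Let ψ : ℝⁿ → ℝ be C¹ with ∇ψ Lipschitz with constant 2M_ψ on conv C, let η > 0, and let x be a point of the sublevel set S := {z : ψ(z) ≤ 0} with ψ(x) = 0 and ‖∇ψ(x)‖ > 2η. Then for every y ∈ S, ⟨∇ψ(x)/‖∇ψ(x)‖, y − x⟩ ≤ (M_ψ/η)·‖y − x‖²; that is, the proximal normal inequality holds at x with constant η/(2M_ψ) for normal directions parallel to ∇ψ(x). -/
/-!
Apply the mean value inequality on the segment `[x, y]` to `ψ` minus its linearization at `x`.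
The Lipschitz bound on `∇ψ` gives `|ψ y - ψ x - ⟪∇ψ x, y - x⟫| ≤ 2 M_ψ ‖y - x‖²`, and
`ψ y ≤ 0 = ψ x` turns this into `⟪∇ψ x, y - x⟫ ≤ 2 M_ψ ‖y - x‖²`. Dividing by
`‖∇ψ x‖ > 2η` gives the claim.
-/

open Real InnerProductSpace

section GradientLipschitz

variable {E : Type*} [NormedAddCommGroup E] [InnerProductSpace ℝ E] [CompleteSpace E]
  {f : E → ℝ} {g : E → E} {x y : E} {L : ℝ}

theorem abs_sub_sub_inner_le_of_gradient_lipschitz_on_segment (hL : 0 ≤ L)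
    (hf : ∀ z ∈ segment ℝ x y, HasGradientAt f (g z) z)
    (hg : ∀ z ∈ segment ℝ x y, ‖g z - g x‖ ≤ L * ‖z - x‖) :
    |f y - f x - ⟪g x, y - x⟫_ℝ| ≤ L * ‖y - x‖ ^ 2 := by
  have hmvt := (convex_segment x y).norm_image_sub_le_of_norm_hasFDerivWithin_le'
    (f' := fun z => toDual ℝ E (g z)) (φ := toDual ℝ E (g x)) (C := L * ‖y - x‖)
    (fun z hz => (hf z hz).hasFDerivAt.hasFDerivWithinAt) ?_
    (left_mem_segment ℝ x y) (right_mem_segment ℝ x y)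
  · simpa [toDual_apply_apply, sq, mul_assoc] using hmvt
  · intro z hz
    rw [← map_sub, LinearIsometryEquiv.norm_map]
    exact (hg z hz).trans (by gcongr; exact norm_sub_le_of_mem_segment hz)

theorem inner_gradient_sub_le_of_le_of_gradient_lipschitz_on_segment (hL : 0 ≤ L)
    (hf : ∀ z ∈ segment ℝ x y, HasGradientAt f (g z) z)
    (hg : ∀ z ∈ segment ℝ x y, ‖g z - g x‖ ≤ L * ‖z - x‖) (hxy : f y ≤ f x) :
    ⟪g x, y - x⟫_ℝ ≤ L * ‖y - x‖ ^ 2 := by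
  have h := neg_abs_le (f y - f x - ⟪g x, y - x⟫_ℝ)
  linarith [abs_sub_sub_inner_le_of_gradient_lipschitz_on_segment hL hf hg]

end GradientLipschitz

theorem stmt_13_general {n : ℕ} (C : Set (EuclideanSpace ℝ (Fin n)))
    (Mψ η : ℝ) (hMψ : 0 < Mψ) (hη : 0 < η)
    (ψ : EuclideanSpace ℝ (Fin n) → ℝ)
    (g : EuclideanSpace ℝ (Fin n) → EuclideanSpace ℝ (Fin n))
    (hg : ∀ z, HasGradientAt ψ (g z) z)
    (hlip : ∀ a ∈ convexHull ℝ C, ∀ b ∈ convexHull ℝ C,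
      ‖g a - g b‖ ≤ 2 * Mψ * ‖a - b‖)
    (hSC : {z : EuclideanSpace ℝ (Fin n) | ψ z ≤ 0} ⊆ C)
    (x : EuclideanSpace ℝ (Fin n)) (hx : ψ x = 0) (hgx : 2 * η < ‖g x‖) :
    ∀ y, ψ y ≤ 0 →
      (inner ℝ ((‖g x‖)⁻¹ • g x) (y - x) : ℝ) ≤ (Mψ / η) * ‖y - x‖ ^ 2 := by
  intro y hy
  have hxC : x ∈ convexHull ℝ C := subset_convexHull ℝ C (hSC hx.le)
  have hyC : y ∈ convexHull ℝ C := subset_convexHull ℝ C (hSC hy)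
  have hseg := (convex_convexHull ℝ C).segment_subset hxC hyC
  have hinner : ⟪g x, y - x⟫_ℝ ≤ 2 * Mψ * ‖y - x‖ ^ 2 :=
    inner_gradient_sub_le_of_le_of_gradient_lipschitz_on_segment (by positivity)
      (fun z _ => hg z) (fun z hz => hlip z (hseg hz) x hxC) (hx ▸ hy)
  rw [real_inner_smul_left, inv_mul_le_iff₀ (by linarith)]
  calc ⟪g x, y - x⟫_ℝ ≤ 2 * Mψ * ‖y - x‖ ^ 2 := hinner
    _ = 2 * η * ((Mψ / η) * ‖y - x‖ ^ 2) := by field_simp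
    _ ≤ ‖g x‖ * ((Mψ / η) * ‖y - x‖ ^ 2) := by gcongr

theorem stmt_13 {n : ℕ} (C : Set (EuclideanSpace ℝ (Fin n))) (hC : IsCompact C)
    (Mψ η : ℝ) (hMψ : 0 < Mψ) (hη : 0 < η)
    (ψ : EuclideanSpace ℝ (Fin n) → ℝ)
    (g : EuclideanSpace ℝ (Fin n) → EuclideanSpace ℝ (Fin n))
    (hg : ∀ z, HasGradientAt ψ (g z) z)
    (hlip : ∀ a ∈ convexHull ℝ C, ∀ b ∈ convexHull ℝ C,
      ‖g a - g b‖ ≤ 2 * Mψ * ‖a - b‖)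
    (hSC : {z : EuclideanSpace ℝ (Fin n) | ψ z ≤ 0} ⊆ C)
    (x : EuclideanSpace ℝ (Fin n)) (hx : ψ x = 0) (hgx : 2 * η < ‖g x‖) :
    ∀ y, ψ y ≤ 0 →
      (inner ℝ ((‖g x‖)⁻¹ • g x) (y - x) : ℝ) ≤ (Mψ / η) * ‖y - x‖ ^ 2 :=
  stmt_13_general C Mψ η hMψ hη ψ g hg hlip hSC x hx hgx
end

section
/- Suppose ψ_1,…,ψ_r are C¹ with each ∇ψ_i Lipschitz with constant 2M_ψ on conv C, and let x be a point with ∑_{i=1}^r e^{γψ_i(x)} = 1 (i.e., ψ_γ(x) = 0) and ‖∇ψ_γ(x)‖ > 2η, where ψ_γ is the log-sum-exp approximation. Then for any ζ = λ·∑_i e^{γψ_i(x)}∇ψ_i(x) with λ > 0 and any y with ψ_γ(y) ≤ 0 (with x, y ∈ conv C), we have ⟨ζ/‖ζ‖, y − x⟩ ≤ (M_ψ/η)·‖y − x‖². -/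
/-!
By the mean value theorem and the Lipschitz bound on the gradients along the segment `[x, y]`,
`ψ i y ≥ ψ i x + ⟪g i x, y - x⟫ - 2 Mψ ‖y - x‖²` for every `i`. Multiplying by `γ` and
exponentiating, the weights `exp (γ ψ i x)`, which sum to `1`, times
`exp (γ (⟪g i x, y - x⟫ - 2 Mψ ‖y - x‖²))` sum to at most `∑ i, exp (γ ψ i y) ≤ 1`. Jensen's
inequality for `exp` then gives `⟪G, y - x⟫ ≤ 2 Mψ ‖y - x‖²` for the weighted gradient `G`, and
dividing by `‖G‖ > 2η` yields the claim.
-/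

open Real

theorem add_inner_sub_sub_le_of_gradient_lipschitz {F : Type*} [NormedAddCommGroup F]
    [InnerProductSpace ℝ F] [CompleteSpace F] {f : F → ℝ} {g : F → F} {s : Set F} {L : ℝ}
    (hL : 0 ≤ L) (hs : Convex ℝ s) (hf : ∀ z ∈ s, HasGradientWithinAt f (g z) s z)
    (hg : ∀ a ∈ s, ∀ b ∈ s, ‖g a - g b‖ ≤ L * ‖a - b‖) {x y : F} (hx : x ∈ s) (hy : y ∈ s) :
    f x + inner ℝ (g x) (y - x) - L * ‖y - x‖ ^ 2 ≤ f y := by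
  have hseg : segment ℝ x y ⊆ s := hs.segment_subset hx hy
  have hbound : ∀ z ∈ segment ℝ x y,
      ‖InnerProductSpace.toDual ℝ F (g z) - InnerProductSpace.toDual ℝ F (g x)‖ ≤ L * ‖y - x‖ :=
    fun z hz => by
      rw [← map_sub, LinearIsometryEquiv.norm_map]
      calc ‖g z - g x‖ ≤ L * ‖z - x‖ := hg z (hseg hz) x hx
        _ ≤ L * ‖y - x‖ := by gcongr; exact norm_sub_le_of_mem_segment hz
  have hmvt := (convex_segment x y).norm_image_sub_le_of_norm_hasFDerivWithin_le'
    (fun z hz => (hf z (hseg hz)).hasFDerivWithinAt.mono hseg) hbound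
    (left_mem_segment ℝ x y) (right_mem_segment ℝ x y)
  rw [InnerProductSpace.toDual_apply_apply] at hmvt
  have := (abs_le.mp ((Real.norm_eq_abs _).symm.trans_le hmvt)).1
  linarith [sq (‖y - x‖)]

theorem sum_mul_nonpos_of_sum_mul_exp_le_one {ι : Type*} {t : Finset ι} {w a : ι → ℝ}
    (hw₀ : ∀ i ∈ t, 0 ≤ w i) (hw₁ : ∑ i ∈ t, w i = 1) (h : ∑ i ∈ t, w i * exp (a i) ≤ 1) :
    ∑ i ∈ t, w i * a i ≤ 0 := by
  have hjensen := convexOn_exp.map_sum_le hw₀ hw₁ (fun i _ => Set.mem_univ (a i))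
  simp only [smul_eq_mul] at hjensen
  exact exp_le_one_iff.mp (hjensen.trans h)

theorem sum_exp_mul_le_of_add_sub_le {ι : Type*} {t : Finset ι} {γ K : ℝ} {a b c : ι → ℝ}
    (hγ : 0 < γ) (ha : ∑ i ∈ t, exp (γ * a i) = 1) (hb : ∑ i ∈ t, exp (γ * b i) ≤ 1)
    (habc : ∀ i ∈ t, a i + c i - K ≤ b i) :
    ∑ i ∈ t, exp (γ * a i) * c i ≤ K := by
  have hexp : ∑ i ∈ t, exp (γ * a i) * exp (γ * (c i - K)) ≤ 1 := by
    refine le_trans (Finset.sum_le_sum fun i hi => ?_) hb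
    rw [← exp_add, exp_le_exp]
    linarith [mul_le_mul_of_nonneg_left (habc i hi) hγ.le]
  have := sum_mul_nonpos_of_sum_mul_exp_le_one (fun i _ => (exp_pos _).le) ha hexp
  have hsum : ∑ i ∈ t, exp (γ * a i) * (γ * (c i - K))
      = γ * (∑ i ∈ t, exp (γ * a i) * c i) - γ * K * ∑ i ∈ t, exp (γ * a i) := by
    rw [Finset.mul_sum, Finset.mul_sum, ← Finset.sum_sub_distrib]
    exact Finset.sum_congr rfl fun i _ => by ring
  rw [hsum, ha] at this
  exact sub_nonpos.mp (nonpos_of_mul_nonpos_right (by linarith) hγ)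

theorem sum_exp_le_one_of_logSumExp_nonpos {ι : Type*} {t : Finset ι} {γ : ℝ} {b : ι → ℝ}
    (hγ : 0 < γ) (h : 1 / γ * log (∑ i ∈ t, exp (γ * b i)) ≤ 0) :
    ∑ i ∈ t, exp (γ * b i) ≤ 1 := by
  rw [← log_nonpos_iff (Finset.sum_nonneg fun i _ => (exp_pos _).le)]
  exact nonpos_of_mul_nonpos_right h (by positivity)

theorem real_inner_normalize_le_div {E : Type*} [NormedAddCommGroup E] [InnerProductSpace ℝ E]
    {G v : E} {a c : ℝ} (ha : 0 < a) (haG : a ≤ ‖G‖) (hc : 0 ≤ c) (h : inner ℝ G v ≤ c) :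
    inner ℝ (NormedSpace.normalize G) v ≤ c / a := by
  rw [NormedSpace.normalize, real_inner_smul_left, inv_mul_eq_div]
  exact div_le_div₀ hc h ha haG

theorem stmt_14_general {n r : ℕ} (γ η Mψ : ℝ)
    (hγ : 0 < γ) (hη : 0 < η) (hMψ : 0 < Mψ)
    (C : Set (EuclideanSpace ℝ (Fin n)))
    (ψ : Fin r → EuclideanSpace ℝ (Fin n) → ℝ)
    (g : Fin r → EuclideanSpace ℝ (Fin n) → EuclideanSpace ℝ (Fin n))
    (hg : ∀ i z, HasGradientAt (ψ i) (g i z) z)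
    (hlip : ∀ i, ∀ a ∈ convexHull ℝ C, ∀ b ∈ convexHull ℝ C,
      ‖g i a - g i b‖ ≤ 2 * Mψ * ‖a - b‖)
    (x : EuclideanSpace ℝ (Fin n)) (hxC : x ∈ convexHull ℝ C)
    (hx : ∑ i, Real.exp (γ * ψ i x) = 1)
    (hgx : 2 * η < ‖∑ i, Real.exp (γ * ψ i x) • g i x‖)
    (lam : ℝ) (hlam : 0 < lam) :
    ∀ y ∈ convexHull ℝ C,
      (1 / γ) * Real.log (∑ i, Real.exp (γ * ψ i y)) ≤ 0 →
      (inner ℝ ((‖lam • ∑ i, Real.exp (γ * ψ i x) • g i x‖)⁻¹ •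
          (lam • ∑ i, Real.exp (γ * ψ i x) • g i x)) (y - x) : ℝ)
        ≤ (Mψ / η) * ‖y - x‖ ^ 2 := by
  intro y hyC hy
  set G := ∑ i, Real.exp (γ * ψ i x) • g i x
  have hdescent : ∀ i ∈ Finset.univ,
      ψ i x + inner ℝ (g i x) (y - x) - 2 * Mψ * ‖y - x‖ ^ 2 ≤ ψ i y := fun i _ =>
    add_inner_sub_sub_le_of_gradient_lipschitz (by positivity) (convex_convexHull ℝ C)
      (fun z _ => (hg i z).hasFDerivAt.hasFDerivWithinAt) (hlip i) hxC hyC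
  have hGv : inner ℝ G (y - x) ≤ 2 * Mψ * ‖y - x‖ ^ 2 := by
    simp only [G, sum_inner, real_inner_smul_left]
    exact sum_exp_mul_le_of_add_sub_le hγ hx (sum_exp_le_one_of_logSumExp_nonpos hγ hy) hdescent
  change inner ℝ (NormedSpace.normalize (lam • G)) (y - x) ≤ _
  rw [NormedSpace.normalize_smul_of_pos hlam]
  calc inner ℝ (NormedSpace.normalize G) (y - x) ≤ 2 * Mψ * ‖y - x‖ ^ 2 / (2 * η) :=
        real_inner_normalize_le_div (by positivity) hgx.le (by positivity) hGv
    _ = Mψ / η * ‖y - x‖ ^ 2 := by field_simp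

theorem stmt_14 {n r : ℕ} (hr : 1 ≤ r) (γ η Mψ : ℝ)
    (hγ : 0 < γ) (hη : 0 < η) (hMψ : 0 < Mψ)
    (C : Set (EuclideanSpace ℝ (Fin n))) (hC : IsCompact C)
    (ψ : Fin r → EuclideanSpace ℝ (Fin n) → ℝ)
    (g : Fin r → EuclideanSpace ℝ (Fin n) → EuclideanSpace ℝ (Fin n))
    (hg : ∀ i z, HasGradientAt (ψ i) (g i z) z)
    (hlip : ∀ i, ∀ a ∈ convexHull ℝ C, ∀ b ∈ convexHull ℝ C,
      ‖g i a - g i b‖ ≤ 2 * Mψ * ‖a - b‖)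
    (hsub : {z : EuclideanSpace ℝ (Fin n) |
        (1 / γ) * Real.log (∑ i, Real.exp (γ * ψ i z)) ≤ 0} ⊆ C)
    (x : EuclideanSpace ℝ (Fin n)) (hxC : x ∈ convexHull ℝ C)
    (hx : ∑ i, Real.exp (γ * ψ i x) = 1)
    (hgx : 2 * η < ‖∑ i, Real.exp (γ * ψ i x) • g i x‖)
    (lam : ℝ) (hlam : 0 < lam) :
    ∀ y ∈ convexHull ℝ C,
      (1 / γ) * Real.log (∑ i, Real.exp (γ * ψ i y)) ≤ 0 →
      (inner ℝ ((‖lam • ∑ i, Real.exp (γ * ψ i x) • g i x‖)⁻¹ •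
          (lam • ∑ i, Real.exp (γ * ψ i x) • g i x)) (y - x) : ℝ)
        ≤ (Mψ / η) * ‖y - x‖ ^ 2 :=
  stmt_14_general γ η Mψ hγ hη hMψ C ψ g hg hlip x hxC hx hgx lam hlam
end
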